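/- Let r ∈ (1, ∞), let 0 ≤ L < 1, and let f : 𝒜 → 𝒜 be a mapping with f(0) = 0 for which there exists a function φ : 𝒜 × 𝒜 × 𝒜 → [0, ∞) such that ‖r μ f((a+b)/r) + r μ f((a−b)/r) − 2 f(μ a) + f(c c* c) − f(c) c* c − c (f(c))* c − c c* f(c)‖ ≤ φ(a, b, c) for all μ ∈ 𝕋 and all a, b, c ∈ 𝒜, and φ(a, b, c) ≤ r L φ(a/r, b/r, c/r) for all a, b, c ∈ 𝒜. Then there exists a unique J*-derivation D : 𝒜 → 𝒜 such that ‖f(a) − D(a)‖ ≤ (L/(1 − L)) φ(a, 0, 0) for all a ∈ 𝒜. -/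

import Mathlib

open ContinuousLinearMap Filter

variable {H K : Type*} [NormedAddCommGroup H] [InnerProductSpace ℂ H] [CompleteSpace H]
  [NormedAddCommGroup K] [InnerProductSpace ℂ K] [CompleteSpace K]

/-- `𝒜` is closed under the `J*`-triple product `x ↦ x x* x`. -/
def JStarClosed (𝒜 : Submodule ℂ (H →L[ℂ] K)) : Prop :=
  ∀ x : H →L[ℂ] K, x ∈ 𝒜 → (x ∘L adjoint x) ∘L x ∈ 𝒜

/-- The triple product `c c* c` as an element of `𝒜`. -/
noncomputable def cube (𝒜 : Submodule ℂ (H →L[ℂ] K)) (hA : JStarClosed 𝒜) (c : 𝒜) : 𝒜 :=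
  ⟨((c : H →L[ℂ] K) ∘L adjoint (c : H →L[ℂ] K)) ∘L (c : H →L[ℂ] K), hA c c.2⟩

/-- `D : 𝒜 → 𝒜` is a `J*`-derivation: it is `ℂ`-linear and satisfies
`D(c c* c) = D(c) c* c + c (D(c))* c + c c* D(c)`. -/
noncomputable def IsJStarDerivation (𝒜 : Submodule ℂ (H →L[ℂ] K)) (hA : JStarClosed 𝒜)
    (D : 𝒜 → 𝒜) : Prop :=
  (∀ a b : 𝒜, D (a + b) = D a + D b) ∧
  (∀ (z : ℂ) (a : 𝒜), D (z • a) = z • D a) ∧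
  (∀ c : 𝒜, (D (cube 𝒜 hA c) : H →L[ℂ] K) =
      ((D c : H →L[ℂ] K) ∘L adjoint (c : H →L[ℂ] K)) ∘L (c : H →L[ℂ] K) +
      ((c : H →L[ℂ] K) ∘L adjoint (D c : H →L[ℂ] K)) ∘L (c : H →L[ℂ] K) +
      ((c : H →L[ℂ] K) ∘L adjoint (c : H →L[ℂ] K)) ∘L (D c : H →L[ℂ] K))

/-- The defect of the generalized Jensen functional equation combined with the
`J*`-derivation identity, for a map `f : 𝒜 → 𝒜`, parameter `r` and scalar `μ`. -/
noncomputable def jensenDefect (𝒜 : Submodule ℂ (H →L[ℂ] K)) (hA : JStarClosed 𝒜)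
    (r : ℝ) (f : 𝒜 → 𝒜) (μ : ℂ) (a b c : 𝒜) : H →L[ℂ] K :=
  ((r : ℂ) * μ) • (f ((r : ℂ)⁻¹ • (a + b)) : H →L[ℂ] K) +
  ((r : ℂ) * μ) • (f ((r : ℂ)⁻¹ • (a - b)) : H →L[ℂ] K) -
  (2 : ℂ) • (f (μ • a) : H →L[ℂ] K) +
  (f (cube 𝒜 hA c) : H →L[ℂ] K) -
  ((f c : H →L[ℂ] K) ∘L adjoint (c : H →L[ℂ] K)) ∘L (c : H →L[ℂ] K) -
  ((c : H →L[ℂ] K) ∘L adjoint (f c : H →L[ℂ] K)) ∘L (c : H →L[ℂ] K) -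
  ((c : H →L[ℂ] K) ∘L adjoint (c : H →L[ℂ] K)) ∘L (f c : H →L[ℂ] K)

/-!
Hyers' direct method. The defect at `(r a, 0, 0)` with `μ = 1` gives
`‖f a - r⁻¹ f (r a)‖ ≤ (L/2) φ(a,0,0)`, and iterating the hypothesis on `φ` gives
`φ(rⁿ·) ≤ (rL)ⁿ φ`, so `r⁻ⁿ f (rⁿ a)` is Cauchy at geometric rate `L`; its limit `D` lies in `𝒜`
because `𝒜` is closed. Rescaling the defect at `(rⁿ a, rⁿ b, 0)` by `r⁻ⁿ`, and at `(0, 0, rⁿ c)` by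
`r⁻³ⁿ`, shows that `D` satisfies the Jensen equation for every `μ ∈ 𝕋` and the `J*`-derivation
identity exactly. The Jensen equation makes `D` additive and `𝕋`-homogeneous, hence `ℂ`-linear,
since every complex number is a positive integer times a sum of two unimodular ones. Two maps with
these properties within `(L/(1-L)) φ(·,0,0)` of `f` differ at `a` by `r⁻ⁿ` times their difference
at `rⁿ a`, which is `O(Lⁿ)`.
-/

open Topology

theorem le_pow_mul_of_le_mul_inv_smul {G X : Type*} [GroupWithZero G] [MulAction G X]
    {ψ : X → ℝ} {s : G} (hs : s ≠ 0) {C : ℝ} (hC : 0 ≤ C) (h : ∀ x, ψ x ≤ C * ψ (s⁻¹ • x))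
    (n : ℕ) (x : X) : ψ (s ^ n • x) ≤ C ^ n * ψ x := by
  induction n with
  | zero => simp
  | succ n ih =>
    calc ψ (s ^ (n + 1) • x) ≤ C * ψ (s ^ n • x) := by
          simpa [pow_succ', mul_smul, inv_smul_smul₀ hs] using h (s ^ (n + 1) • x)
      _ ≤ C * (C ^ n * ψ x) := mul_le_mul_of_nonneg_left ih hC
      _ = C ^ (n + 1) * ψ x := by ring

theorem eq_zero_of_tendsto_of_norm_le_geometric {F : Type*} [NormedAddCommGroup F] {u : ℕ → F}
    {l : F} (hu : Tendsto u atTop (𝓝 l)) {C L : ℝ} (hL0 : 0 ≤ L) (hL1 : L < 1)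
    (hb : ∀ n, ‖u n‖ ≤ C * L ^ n) : l = 0 :=
  tendsto_nhds_unique hu <| squeeze_zero_norm hb <| by
    simpa using (tendsto_pow_atTop_nhds_zero_of_lt_one hL0 hL1).const_mul C

section Rescale

variable {𝕜 E F : Type*} [Field 𝕜] [AddCommGroup E] [Module 𝕜 E] [AddCommGroup F] [Module 𝕜 F]

def rescale (s : 𝕜) (n : ℕ) (f : E → F) (x : E) : F :=
  (s ^ n)⁻¹ • f (s ^ n • x)

theorem smul_rescale {s : 𝕜} {f : E → F} (hs : s ≠ 0) (n : ℕ) (x : E) :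
    s ^ n • rescale s n f x = f (s ^ n • x) :=
  smul_inv_smul₀ (pow_ne_zero n hs) _

end Rescale

section DirectMethod

variable {𝕜 E F : Type*} [NormedField 𝕜] [AddCommGroup E] [Module 𝕜 E] [NormedAddCommGroup F]
  [NormedSpace 𝕜 F] {s : 𝕜} {f : E → F}

@[simp]
theorem rescale_zero : rescale s 0 f = f := by
  funext x; simp [rescale]

theorem dist_rescale_succ_le (hs : s ≠ 0) {L : ℝ} {ε : E → ℝ}
    (hstep : ∀ x, ‖f x - s⁻¹ • f (s • x)‖ ≤ ε x)
    (hε : ∀ n x, ε (s ^ n • x) ≤ (‖s‖ * L) ^ n * ε x) (n : ℕ) (x : E) :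
    dist (rescale s n f x) (rescale s (n + 1) f x) ≤ ε x * L ^ n := by
  have hdiff : rescale s n f x - rescale s (n + 1) f x
      = (s ^ n)⁻¹ • (f (s ^ n • x) - s⁻¹ • f (s • s ^ n • x)) := by
    simp only [rescale, pow_succ', mul_smul]
    module
  rw [dist_eq_norm, hdiff, norm_smul, norm_inv, norm_pow]
  calc (‖s‖ ^ n)⁻¹ * ‖f (s ^ n • x) - s⁻¹ • f (s • s ^ n • x)‖
      ≤ (‖s‖ ^ n)⁻¹ * ((‖s‖ * L) ^ n * ε x) := by
        gcongr
        exact (hstep _).trans (hε n x)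
    _ = ε x * L ^ n := by
        rw [mul_pow]; field_simp

theorem exists_tendsto_rescale [CompleteSpace F] (hs : s ≠ 0) {L : ℝ} (hL1 : L < 1) {ε : E → ℝ}
    (hstep : ∀ x, ‖f x - s⁻¹ • f (s • x)‖ ≤ ε x)
    (hε : ∀ n x, ε (s ^ n • x) ≤ (‖s‖ * L) ^ n * ε x) :
    ∃ D : E → F, ∀ x, Tendsto (fun n ↦ rescale s n f x) atTop (𝓝 (D x)) ∧
      ‖f x - D x‖ ≤ ε x / (1 - L) := by
  have hgeom := dist_rescale_succ_le hs hstep hε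
  choose D hD using fun x ↦
    cauchySeq_tendsto_of_complete (cauchySeq_of_le_geometric L (ε x) hL1 (hgeom · x))
  refine ⟨D, fun x ↦ ⟨hD x, ?_⟩⟩
  simpa [dist_eq_norm] using dist_le_of_le_geometric_of_tendsto₀ L (ε x) hL1 (hgeom · x) (hD x)

theorem eq_of_norm_sub_le_of_map_pow_smul (hs : s ≠ 0) {L C : ℝ} (hL0 : 0 ≤ L) (hL1 : L < 1)
    (hC : 0 ≤ C) {ψ : E → ℝ} (hψ : ∀ n x, ψ (s ^ n • x) ≤ (‖s‖ * L) ^ n * ψ x)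
    {D D' : E → F} (hD : ∀ n : ℕ, ∀ x, D (s ^ n • x) = s ^ n • D x)
    (hD' : ∀ n : ℕ, ∀ x, D' (s ^ n • x) = s ^ n • D' x)
    (hfD : ∀ x, ‖f x - D x‖ ≤ C * ψ x) (hfD' : ∀ x, ‖f x - D' x‖ ≤ C * ψ x) : D = D' := by
  funext x
  refine sub_eq_zero.1 (eq_zero_of_tendsto_of_norm_le_geometric tendsto_const_nhds hL0 hL1
    (C := 2 * C * ψ x) fun n ↦ ?_)
  have hsn : 0 < ‖s‖ ^ n := pow_pos (norm_pos_iff.2 hs) n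
  have hsplit : s ^ n • (D x - D' x) =
      (f (s ^ n • x) - D' (s ^ n • x)) - (f (s ^ n • x) - D (s ^ n • x)) := by
    rw [smul_sub, ← hD, ← hD']; abel
  refine le_of_mul_le_mul_left ?_ hsn
  calc ‖s‖ ^ n * ‖D x - D' x‖ = ‖s ^ n • (D x - D' x)‖ := by rw [norm_smul, norm_pow]
    _ ≤ C * ψ (s ^ n • x) + C * ψ (s ^ n • x) := by
        rw [hsplit]; exact (norm_sub_le _ _).trans (add_le_add (hfD' _) (hfD _))
    _ ≤ 2 * C * ((‖s‖ * L) ^ n * ψ x) := by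
        linarith [mul_le_mul_of_nonneg_left (hψ n x) hC]
    _ = ‖s‖ ^ n * (2 * C * ψ x * L ^ n) := by ring

end DirectMethod

section Jensen

variable {𝕜 E F : Type*} [Field 𝕜] [AddCommGroup E] [Module 𝕜 E] [AddCommGroup F] [Module 𝕜 F]

def jensenOp (s : 𝕜) (D : E → F) (μ : 𝕜) (a b : E) : F :=
  (s * μ) • D (s⁻¹ • (a + b)) + (s * μ) • D (s⁻¹ • (a - b)) - (2 : 𝕜) • D (μ • a)

variable {s : 𝕜} {D : E → F}

theorem jensenOp_rescale (n : ℕ) (f : E → F) (μ : 𝕜) (a b : E) :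
    jensenOp s (rescale s n f) μ a b = (s ^ n)⁻¹ • jensenOp s f μ (s ^ n • a) (s ^ n • b) := by
  simp only [jensenOp, rescale, smul_comm (s ^ n) μ a, smul_comm (s ^ n) s⁻¹, ← smul_add,
    ← smul_sub]
  module

theorem tendsto_jensenOp [TopologicalSpace F] [IsTopologicalAddGroup F] [ContinuousConstSMul 𝕜 F]
    {ι : Type*} {l : Filter ι} {g : ι → E → F} (hg : ∀ x, Tendsto (fun i ↦ g i x) l (𝓝 (D x)))
    (s μ : 𝕜) (a b : E) :
    Tendsto (fun i ↦ jensenOp s (g i) μ a b) l (𝓝 (jensenOp s D μ a b)) :=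
  (((hg _).const_smul _).add ((hg _).const_smul _)).sub ((hg _).const_smul _)

variable [CharZero 𝕜]

theorem map_unit_smul_of_jensenOp_eq_zero {μ : 𝕜} {a : E} (h1 : jensenOp s D 1 a 0 = 0)
    (hμ : jensenOp s D μ a 0 = 0) : D (μ • a) = μ • D a := by
  simp only [jensenOp, add_zero, sub_zero, mul_one, one_smul, sub_eq_zero] at h1 hμ
  refine smul_right_injective F (two_ne_zero (α := 𝕜)) ?_
  dsimp only
  rw [← hμ, smul_comm (2 : 𝕜) μ, ← h1]
  module

theorem map_zero_of_jensenOp_eq_zero (hs1 : s ≠ 1) (h : jensenOp s D 1 0 0 = 0) : D 0 = 0 := by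
  simp only [jensenOp, add_zero, sub_zero, smul_zero, mul_one] at h
  have h2 : ((2 : 𝕜) * (s - 1)) • D 0 = 0 := by rw [← h]; module
  exact (smul_eq_zero.1 h2).resolve_left (mul_ne_zero two_ne_zero (sub_ne_zero.2 hs1))

theorem map_add_of_jensenOp_eq_zero (hs : s ≠ 0) (hs1 : s ≠ 1)
    (h : ∀ a b, jensenOp s D 1 a b = 0) (u v : E) : D (u + v) = D u + D v := by
  have hmid : ∀ u v, s • D u + s • D v = (2 : 𝕜) • D ((s / 2) • (u + v)) := fun u v ↦ by
    have h' := h ((s / 2) • (u + v)) ((s / 2) • (u - v))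
    have e1 : s⁻¹ • ((s / 2) • (u + v) + (s / 2) • (u - v)) = u := by
      match_scalars <;> field_simp <;> ring
    have e2 : s⁻¹ • ((s / 2) • (u + v) - (s / 2) • (u - v)) = v := by
      match_scalars <;> field_simp <;> ring
    rwa [jensenOp, e1, e2, mul_one, one_smul, sub_eq_zero] at h'
  have hhalf := hmid (u + v) 0
  rw [map_zero_of_jensenOp_eq_zero hs1 (h 0 0), smul_zero, add_zero, add_zero, ← hmid u v] at hhalf
  exact smul_right_injective F hs (by simpa [smul_add] using hhalf)

end Jensen

theorem Complex.exists_norm_eq_one_add_eq {z : ℂ} (hz : ‖z‖ ≤ 2) :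
    ∃ μ ν : ℂ, ‖μ‖ = 1 ∧ ‖ν‖ = 1 ∧ μ + ν = z := by
  -- `z = 2 cos α · e^{iθ} = e^{i(θ+α)} + e^{i(θ-α)}` with `θ = arg z`, `cos α = ‖z‖ / 2`
  set α := Real.arccos (‖z‖ / 2)
  refine ⟨exp (↑(z.arg + α) * I), exp (↑(z.arg - α) * I), norm_exp_ofReal_mul_I _,
    norm_exp_ofReal_mul_I _, ?_⟩
  have hcos : Real.cos α = ‖z‖ / 2 := Real.cos_arccos (by linarith [norm_nonneg z]) (by linarith)
  conv_rhs => rw [← norm_mul_exp_arg_mul_I z, ← div_mul_cancel₀ (‖z‖ : ℝ) two_ne_zero, ← hcos]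
  push_cast
  rw [cos, add_mul, sub_mul, exp_add, exp_sub, neg_mul, exp_neg]
  ring

theorem map_smul_of_map_add_of_map_unit_smul {E F : Type*} [AddCommGroup E] [Module ℂ E]
    [AddCommGroup F] [Module ℂ F] {D : E → F} (hadd : ∀ x y, D (x + y) = D x + D y)
    (hunit : ∀ μ : ℂ, ‖μ‖ = 1 → ∀ x, D (μ • x) = μ • D x) (z : ℂ) (x : E) :
    D (z • x) = z • D x := by
  obtain ⟨n, hn⟩ := exists_nat_gt ‖z‖
  have hn0 : (n : ℂ) ≠ 0 := by
    exact_mod_cast (Nat.cast_pos.1 ((norm_nonneg z).trans_lt hn)).ne'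
  obtain ⟨μ, ν, hμ, hν, hsum⟩ := Complex.exists_norm_eq_one_add_eq (z := z / n) (by
    rw [norm_div, Complex.norm_natCast, div_le_iff₀ (by linarith [norm_nonneg z])]
    linarith)
  have hsumD : ∀ y, D ((μ + ν) • y) = (μ + ν) • D y := fun y ↦ by
    rw [add_smul, hadd, hunit μ hμ, hunit ν hν, add_smul]
  have hz : z = n * (μ + ν) := by rw [hsum, mul_div_cancel₀ _ hn0]
  rw [hz, mul_smul, mul_smul, Nat.cast_smul_eq_nsmul, Nat.cast_smul_eq_nsmul, ← hsumD]
  exact map_nsmul (AddMonoidHom.mk' D hadd) _ _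

/-- The derivative of `c ↦ c c* c` at `c` in the direction `x`; a `J*`-derivation is a map `D`
with `D (c c* c) = cubeDeriv c (D c)`. -/
noncomputable def cubeDeriv (c x : H →L[ℂ] K) : H →L[ℂ] K :=
  (x ∘L adjoint c) ∘L c + (c ∘L adjoint x) ∘L c + (c ∘L adjoint c) ∘L x

theorem continuous_cubeDeriv (c : H →L[ℂ] K) : Continuous (cubeDeriv c) := by
  have hadj : Continuous (adjoint : (H →L[ℂ] K) → (K →L[ℂ] H)) :=
    (adjoint : (H →L[ℂ] K) ≃ₗᵢ⋆[ℂ] (K →L[ℂ] H)).continuous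
  unfold cubeDeriv
  fun_prop

theorem adjoint_ofReal_smul (t : ℝ) (x : H →L[ℂ] K) :
    adjoint ((t : ℂ) • x) = (t : ℂ) • adjoint x := by
  rw [map_smulₛₗ, Complex.conj_ofReal]

theorem cubeDeriv_ofReal_smul (t : ℝ) (c x : H →L[ℂ] K) :
    cubeDeriv ((t : ℂ) • c) ((t : ℂ) • x) = ((t : ℂ) ^ 3) • cubeDeriv c x := by
  simp only [cubeDeriv, adjoint_ofReal_smul, smul_comp, comp_smul, smul_add, smul_smul]
  ring_nf

theorem cube_ofReal_smul (𝒜 : Submodule ℂ (H →L[ℂ] K)) (hA : JStarClosed 𝒜) (t : ℝ) (c : 𝒜) :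
    cube 𝒜 hA ((t : ℂ) • c) = ((t : ℂ) ^ 3) • cube 𝒜 hA c := by
  ext1
  simp only [cube, Submodule.coe_smul, adjoint_ofReal_smul, smul_comp, comp_smul, smul_smul]
  ring_nf

@[simp]
theorem cube_zero (𝒜 : Submodule ℂ (H →L[ℂ] K)) (hA : JStarClosed 𝒜) : cube 𝒜 hA 0 = 0 := by
  ext1; simp [cube]

section Defect

variable {𝒜 : Submodule ℂ (H →L[ℂ] K)} {hA : JStarClosed 𝒜} {r L : ℝ} {f : 𝒜 → 𝒜}
  {φ : 𝒜 → 𝒜 → 𝒜 → ℝ}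

theorem jensenDefect_third_zero (hf0 : f 0 = 0) (μ : ℂ) (a b : 𝒜) :
    jensenDefect 𝒜 hA r f μ a b 0 = jensenOp (r : ℂ) (Subtype.val ∘ f) μ a b := by
  simp [jensenDefect, jensenOp, hf0]

theorem jensenDefect_one_zero_zero (hf0 : f 0 = 0) (c : 𝒜) :
    jensenDefect 𝒜 hA r f 1 0 0 c =
      (f (cube 𝒜 hA c) : H →L[ℂ] K) - cubeDeriv (c : H →L[ℂ] K) (f c : H →L[ℂ] K) := by
  simp only [jensenDefect, cubeDeriv, add_zero, sub_zero, smul_zero, hf0, ZeroMemClass.coe_zero]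
  abel

theorem norm_sub_inv_smul_le_of_jensenDefect (hr : 0 < r) (hf0 : f 0 = 0)
    (hineq : ∀ a, ‖jensenDefect 𝒜 hA r f 1 a 0 0‖ ≤ φ a 0 0)
    (hφn : ∀ n : ℕ, ∀ a b c, φ ((r : ℂ) ^ n • a) ((r : ℂ) ^ n • b) ((r : ℂ) ^ n • c)
      ≤ (r * L) ^ n * φ a b c) (a : 𝒜) :
    ‖(f a : H →L[ℂ] K) - (r : ℂ)⁻¹ • (f ((r : ℂ) • a) : H →L[ℂ] K)‖ ≤ L / 2 * φ a 0 0 := by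
  have hs : (r : ℂ) ≠ 0 := by exact_mod_cast hr.ne'
  have h := hineq ((r : ℂ) • a)
  rw [jensenDefect_third_zero hf0] at h
  have hφ1 : φ ((r : ℂ) • a) 0 0 ≤ r * L * φ a 0 0 := by simpa using hφn 1 a 0 0
  have e : (f a : H →L[ℂ] K) - (r : ℂ)⁻¹ • (f ((r : ℂ) • a) : H →L[ℂ] K) =
      ((2 : ℂ) * r)⁻¹ • jensenOp (r : ℂ) (Subtype.val ∘ f) 1 ((r : ℂ) • a) 0 := by
    simp only [jensenOp, Function.comp_apply, add_zero, sub_zero, mul_one, one_smul,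
      inv_smul_smul₀ hs]
    match_scalars <;> field_simp; norm_num
  rw [e, norm_smul, norm_inv, norm_mul, Complex.norm_real, Real.norm_of_nonneg hr.le,
    Complex.norm_two]
  calc _ ≤ (2 * r)⁻¹ * (r * L * φ a 0 0) := by gcongr; exact h.trans hφ1
    _ = L / 2 * φ a 0 0 := by field_simp

theorem norm_jensenOp_rescale_le (hr : 0 < r) (hf0 : f 0 = 0) {μ : ℂ}
    (hineq : ∀ a b, ‖jensenDefect 𝒜 hA r f μ a b 0‖ ≤ φ a b 0)
    (hφn : ∀ n : ℕ, ∀ a b c, φ ((r : ℂ) ^ n • a) ((r : ℂ) ^ n • b) ((r : ℂ) ^ n • c)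
      ≤ (r * L) ^ n * φ a b c) (n : ℕ) (a b : 𝒜) :
    ‖jensenOp (r : ℂ) (rescale (r : ℂ) n (Subtype.val ∘ f)) μ a b‖ ≤ φ a b 0 * L ^ n := by
  have h := hineq ((r : ℂ) ^ n • a) ((r : ℂ) ^ n • b)
  rw [jensenDefect_third_zero hf0] at h
  have hφ := hφn n a b 0
  rw [smul_zero] at hφ
  rw [jensenOp_rescale, norm_smul, norm_inv, norm_pow, Complex.norm_real,
    Real.norm_of_nonneg hr.le]
  calc _ ≤ (r ^ n)⁻¹ * ((r * L) ^ n * φ a b 0) := by gcongr; exact h.trans hφ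
    _ = φ a b 0 * L ^ n := by rw [mul_pow]; field_simp

theorem norm_rescale_cube_sub_cubeDeriv_le (hr : 1 ≤ r) (hL0 : 0 ≤ L) (hf0 : f 0 = 0)
    (hφ0 : ∀ c, 0 ≤ φ 0 0 c) (hineq : ∀ c, ‖jensenDefect 𝒜 hA r f 1 0 0 c‖ ≤ φ 0 0 c)
    (hφn : ∀ n : ℕ, ∀ a b c, φ ((r : ℂ) ^ n • a) ((r : ℂ) ^ n • b) ((r : ℂ) ^ n • c)
      ≤ (r * L) ^ n * φ a b c) (n : ℕ) (c : 𝒜) :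
    ‖rescale (r : ℂ) (3 * n) (Subtype.val ∘ f) (cube 𝒜 hA c) -
      cubeDeriv (c : H →L[ℂ] K) (rescale (r : ℂ) n (Subtype.val ∘ f) c)‖ ≤ φ 0 0 c * L ^ n := by
  have hr0 : 0 < r := one_pos.trans_le hr
  have hs : (r : ℂ) ≠ 0 := by exact_mod_cast hr0.ne'
  have hsn : (r : ℂ) ^ n = ((r ^ n : ℝ) : ℂ) := by push_cast; rfl
  have hs3n : (r : ℂ) ^ (3 * n) = ((r ^ n : ℝ) : ℂ) ^ 3 := by rw [← hsn, ← pow_mul, mul_comm]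
  have hdef : jensenDefect 𝒜 hA r f 1 0 0 ((r : ℂ) ^ n • c) = (r : ℂ) ^ (3 * n) •
      (rescale (r : ℂ) (3 * n) (Subtype.val ∘ f) (cube 𝒜 hA c) -
        cubeDeriv (c : H →L[ℂ] K) (rescale (r : ℂ) n (Subtype.val ∘ f) c)) := by
    rw [jensenDefect_one_zero_zero hf0, smul_sub, smul_rescale hs, hsn, cube_ofReal_smul,
      hs3n, ← cubeDeriv_ofReal_smul, ← hsn, smul_rescale hs]
    rfl
  have h := hineq ((r : ℂ) ^ n • c)
  have hφ := hφn n 0 0 c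
  rw [smul_zero] at hφ
  rw [hdef, norm_smul, norm_pow, Complex.norm_real, Real.norm_of_nonneg hr0.le] at h
  have hrn : r ^ n ≤ r ^ (3 * n) := pow_le_pow_right₀ hr (by omega)
  refine le_of_mul_le_mul_left ?_ (pow_pos hr0 (3 * n))
  calc r ^ (3 * n) * ‖_‖ ≤ (r * L) ^ n * φ 0 0 c := h.trans hφ
    _ ≤ r ^ (3 * n) * (φ 0 0 c * L ^ n) := by
        rw [mul_pow]
        nlinarith [mul_le_mul_of_nonneg_right hrn (mul_nonneg (hφ0 c) (pow_nonneg hL0 n))]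

theorem jensenOp_eq_zero_of_tendsto_rescale (hr : 0 < r) (hL0 : 0 ≤ L) (hL1 : L < 1)
    (hf0 : f 0 = 0) {μ : ℂ} (hineq : ∀ a b, ‖jensenDefect 𝒜 hA r f μ a b 0‖ ≤ φ a b 0)
    (hφn : ∀ n : ℕ, ∀ a b c, φ ((r : ℂ) ^ n • a) ((r : ℂ) ^ n • b) ((r : ℂ) ^ n • c)
      ≤ (r * L) ^ n * φ a b c) {D : 𝒜 → H →L[ℂ] K}
    (hD : ∀ a, Tendsto (fun n ↦ rescale (r : ℂ) n (Subtype.val ∘ f) a) atTop (𝓝 (D a)))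
    (a b : 𝒜) : jensenOp (r : ℂ) D μ a b = 0 :=
  eq_zero_of_tendsto_of_norm_le_geometric (tendsto_jensenOp hD _ μ a b) hL0 hL1
    (norm_jensenOp_rescale_le hr hf0 hineq hφn · a b)

theorem map_cube_eq_cubeDeriv_of_tendsto_rescale (hr : 1 ≤ r) (hL0 : 0 ≤ L) (hL1 : L < 1)
    (hf0 : f 0 = 0) (hφ0 : ∀ c, 0 ≤ φ 0 0 c)
    (hineq : ∀ c, ‖jensenDefect 𝒜 hA r f 1 0 0 c‖ ≤ φ 0 0 c)
    (hφn : ∀ n : ℕ, ∀ a b c, φ ((r : ℂ) ^ n • a) ((r : ℂ) ^ n • b) ((r : ℂ) ^ n • c)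
      ≤ (r * L) ^ n * φ a b c) {D : 𝒜 → H →L[ℂ] K}
    (hD : ∀ a, Tendsto (fun n ↦ rescale (r : ℂ) n (Subtype.val ∘ f) a) atTop (𝓝 (D a)))
    (c : 𝒜) : D (cube 𝒜 hA c) = cubeDeriv (c : H →L[ℂ] K) (D c) :=
  sub_eq_zero.1 <| eq_zero_of_tendsto_of_norm_le_geometric
    (((hD _).comp (tendsto_id.const_mul_atTop' three_pos)).sub
      (((continuous_cubeDeriv _).tendsto _).comp (hD c))) hL0 hL1
    (norm_rescale_cube_sub_cubeDeriv_le hr hL0 hf0 hφ0 hineq hφn · c)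

theorem isJStarDerivation_of_jensenOp_eq_zero {D : 𝒜 → H →L[ℂ] K} (hmem : ∀ a, D a ∈ 𝒜)
    {s : ℂ} (hs : s ≠ 0) (hs1 : s ≠ 1)
    (hjensen : ∀ μ : ℂ, ‖μ‖ = 1 → ∀ a b, jensenOp s D μ a b = 0)
    (hcube : ∀ c : 𝒜, D (cube 𝒜 hA c) = cubeDeriv (c : H →L[ℂ] K) (D c)) :
    IsJStarDerivation 𝒜 hA fun a ↦ ⟨D a, hmem a⟩ := by
  have hadd := map_add_of_jensenOp_eq_zero hs hs1 (hjensen 1 (by simp))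
  refine ⟨fun a b ↦ Subtype.ext (hadd a b), fun z a ↦ Subtype.ext ?_, hcube⟩
  exact map_smul_of_map_add_of_map_unit_smul hadd (fun μ hμ a ↦
    map_unit_smul_of_jensenOp_eq_zero (hjensen 1 (by simp) a 0) (hjensen μ hμ a 0)) z a

end Defect

/-- Theorem 3.2 (stability of `J*`-derivations via the fixed point alternative):
if `f(0) = 0`, the Jensen/`J*` defect of `f` is controlled by `φ`, and
`φ(a,b,c) ≤ rL φ(a/r, b/r, c/r)` for some `L < 1`, then there is a unique
`J*`-derivation `D` with `‖f(a) − D(a)‖ ≤ (L/(1 − L)) φ(a,0,0)`. -/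
theorem stability_JStarDerivation_fixedPoint
    (𝒜 : Submodule ℂ (H →L[ℂ] K)) (hclosed : IsClosed (𝒜 : Set (H →L[ℂ] K)))
    (hA : JStarClosed 𝒜)
    (r : ℝ) (hr : 1 < r) (L : ℝ) (hL0 : 0 ≤ L) (hL1 : L < 1)
    (f : 𝒜 → 𝒜) (hf0 : f 0 = 0)
    (φ : 𝒜 → 𝒜 → 𝒜 → ℝ) (hφ0 : ∀ a b c : 𝒜, 0 ≤ φ a b c)
    (hineq : ∀ (μ : ℂ), ‖μ‖ = 1 → ∀ a b c : 𝒜, ‖jensenDefect 𝒜 hA r f μ a b c‖ ≤ φ a b c)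
    (hφ : ∀ a b c : 𝒜,
      φ a b c ≤ r * L * φ ((r : ℂ)⁻¹ • a) ((r : ℂ)⁻¹ • b) ((r : ℂ)⁻¹ • c)) :
    ∃! D : 𝒜 → 𝒜,
      IsJStarDerivation 𝒜 hA D ∧
      ∀ a : 𝒜, ‖f a - D a‖ ≤ L / (1 - L) * φ a 0 0 := by
  have hr0 : 0 < r := one_pos.trans hr
  have hs : (r : ℂ) ≠ 0 := by exact_mod_cast hr0.ne'
  have hφn : ∀ n : ℕ, ∀ a b c : 𝒜, φ ((r : ℂ) ^ n • a) ((r : ℂ) ^ n • b) ((r : ℂ) ^ n • c)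
      ≤ (r * L) ^ n * φ a b c := fun n a b c ↦
    le_pow_mul_of_le_mul_inv_smul (ψ := fun p : 𝒜 × 𝒜 × 𝒜 ↦ φ p.1 p.2.1 p.2.2) hs
      (by positivity) (fun p ↦ hφ _ _ _) n (a, b, c)
  have hφn₀ : ∀ n : ℕ, ∀ a : 𝒜, φ ((r : ℂ) ^ n • a) 0 0 ≤ (‖(r : ℂ)‖ * L) ^ n * φ a 0 0 :=
    fun n a ↦ by simpa [Real.norm_of_nonneg hr0.le] using hφn n a 0 0
  have hlim := exists_tendsto_rescale (f := Subtype.val ∘ f) hs hL1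
    (norm_sub_inv_smul_le_of_jensenDefect hr0 hf0 (hineq 1 (by simp) · 0 0) hφn)
    fun n a ↦ (mul_le_mul_of_nonneg_left (hφn₀ n a) (by positivity)).trans_eq (by ring)
  obtain ⟨D, hD⟩ := hlim
  have hmem : ∀ a, D a ∈ 𝒜 := fun a ↦ hclosed.mem_of_tendsto (hD a).1
    (Eventually.of_forall fun n ↦ 𝒜.smul_mem _ (f _).2)
  have hJ := isJStarDerivation_of_jensenOp_eq_zero hmem hs (by exact_mod_cast hr.ne')
    (fun μ hμ ↦ jensenOp_eq_zero_of_tendsto_rescale hr0 hL0 hL1 hf0 (hineq μ hμ · · 0) hφn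
      (hD · |>.1))
    (map_cube_eq_cubeDeriv_of_tendsto_rescale hr.le hL0 hL1 hf0 (hφ0 0 0)
      (hineq 1 (by simp) 0 0) hφn (hD · |>.1))
  have hbound : ∀ a, ‖(f a : H →L[ℂ] K) - D a‖ ≤ L / (1 - L) * φ a 0 0 := fun a ↦
    (hD a).2.trans <| by
      rw [div_mul_eq_mul_div L (1 - L)]
      exact div_le_div_of_nonneg_right (by nlinarith [hφ0 a 0 0]) (by linarith)
  refine ⟨_, ⟨hJ, hbound⟩, fun D' ⟨⟨_, hsmul', _⟩, hbound'⟩ ↦ funext fun a ↦ Subtype.ext ?_⟩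
  exact congrFun (eq_of_norm_sub_le_of_map_pow_smul (f := Subtype.val ∘ f) (D := Subtype.val ∘ D')
    hs hL0 hL1 (div_nonneg hL0 (by linarith)) hφn₀ (fun n x ↦ congrArg Subtype.val (hsmul' _ x))
    (fun n x ↦ congrArg Subtype.val (hJ.2.1 _ x)) hbound' hbound) a
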